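/- arXiv:1402.4570 — 4 statements merged into one kernel-verified Lean document; each statement's English description precedes it below -/
import Mathlib

section
/- In the auxiliary finite game with world-chooser opponents constructed from a min-game, the min-game payoff of the lowered play is at most the finite-game payoff: pay_p^{min}(ℓ(σ)) ≤ pay_p^{fin}(σ) for every player p and every play σ of the auxiliary game, with equality whenever the world-chooser opponent p̂ tolerates σ. -/
open Finset

/-- Expected payoff of payoff function `u` under the product (independent) play `σ`. -/
noncomputable def expPay {P : Type} [Fintype P] [DecidableEq P] {S : P → Type}
    [∀ p, Fintype (S p)] (σ : ∀ p, S p → ℝ) (u : (∀ q, S q) → ℝ) : ℝ :=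
  ∑ s : ∀ q, S q, (∏ q, σ q (s q)) * u s

/-- Min-game payoff: the minimum over the `k` component games of the expected payoff. -/
noncomputable def pay {P : Type} [Fintype P] [DecidableEq P] {S : P → Type} [∀ p, Fintype (S p)]
    {k : ℕ} [NeZero k] (u : Fin k → (∀ q, S q) → ℝ) (σ : ∀ p, S p → ℝ) : ℝ :=
  Finset.univ.inf' Finset.univ_nonempty fun i => expPay σ (u i)

/-- Expected payoff of player `p` in the auxiliary finite game, where `σ` are the mixed
strategies of the original players and `ρ p` is the mixed strategy of `p`'s
world-chooser opponent `p̂` over the indices `Fin k`. -/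
noncomputable def payFin {P : Type} [Fintype P] [DecidableEq P] {S : P → Type}
    [∀ p, Fintype (S p)] {k : ℕ} (u : ∀ p : P, Fin k → (∀ q, S q) → ℝ)
    (σ : ∀ p, S p → ℝ) (ρ : P → Fin k → ℝ) (p : P) : ℝ :=
  ∑ i : Fin k, ρ p i * expPay σ (u p i)

/-- For any play `(σ, ρ)` of the auxiliary game with world-chooser opponents, the
min-game payoff of the lowered play `ℓ(σ,ρ) = σ` is at most the finite-game payoff,
with equality whenever the world-chooser opponent `p̂` tolerates the play (recall `p̂`'s
payoff is the negative of `p`'s). -/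
theorem lowered_play_payoff_le {P : Type} [Fintype P] [DecidableEq P]
    {S : P → Type} [∀ p, Fintype (S p)] {k : ℕ} [NeZero k]
    (u : ∀ p : P, Fin k → (∀ q, S q) → ℝ)
    (σ : ∀ p, S p → ℝ) (hσ : ∀ p, σ p ∈ stdSimplex ℝ (S p))
    (ρ : P → Fin k → ℝ) (hρ : ∀ p, ρ p ∈ stdSimplex ℝ (Fin k)) (p : P) :
    pay (u p) σ ≤ payFin u σ ρ p ∧
    ((∀ ρ' ∈ stdSimplex ℝ (Fin k),
        - payFin u σ (Function.update ρ p ρ') p ≤ - payFin u σ ρ p) →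
      pay (u p) σ = payFin u σ ρ p) := by
  classical
  obtain ⟨h0, h1⟩ := hρ p
  set f : Fin k → ℝ := fun i => expPay σ (u p i) with hf
  have hpay : pay (u p) σ = Finset.univ.inf' Finset.univ_nonempty f := rfl
  have hle : pay (u p) σ ≤ payFin u σ ρ p := by
    have : payFin u σ ρ p = ∑ i : Fin k, ρ p i * f i := rfl
    rw [this, hpay]
    calc Finset.univ.inf' Finset.univ_nonempty f
        = ∑ i : Fin k, ρ p i * Finset.univ.inf' Finset.univ_nonempty f := by
          rw [← Finset.sum_mul, h1, one_mul]
      _ ≤ ∑ i : Fin k, ρ p i * f i := by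
          apply Finset.sum_le_sum
          intro i _
          exact mul_le_mul_of_nonneg_left
            (Finset.inf'_le f (Finset.mem_univ i)) (h0 i)
  refine ⟨hle, fun htol => ?_⟩
  obtain ⟨i₀, _, hi₀⟩ := Finset.exists_mem_eq_inf' (Finset.univ_nonempty) f
  set ρ' : Fin k → ℝ := fun j => if j = i₀ then 1 else 0 with hρ'
  have hmem : ρ' ∈ stdSimplex ℝ (Fin k) := by
    constructor
    · intro j; dsimp [ρ']; split <;> norm_num
    · simp [ρ']
  have hupd : payFin u σ (Function.update ρ p ρ') p = f i₀ := by
    unfold payFin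
    simp [Function.update_self, ρ', ite_mul, hf]
  have hge : payFin u σ ρ p ≤ pay (u p) σ := by
    have := htol ρ' hmem
    rw [neg_le_neg_iff, hupd] at this
    rw [hpay, hi₀]
    exact this
  linarith
end

section
/- If σ is a Nash equilibrium of the auxiliary finite game with world-chooser opponents, then the lowered play ℓ(σ) is an equilibrium of the original min-game. -/
open Finset

lemma pay_le_payFin {P : Type} [Fintype P] [DecidableEq P] {S : P → Type}
    [∀ p, Fintype (S p)] {k : ℕ} [NeZero k] (u : ∀ p : P, Fin k → (∀ q, S q) → ℝ)
    (σ : ∀ p, S p → ℝ) (ρ : P → Fin k → ℝ) (p : P) (hρ : ρ p ∈ stdSimplex ℝ (Fin k)) :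
    pay (u p) σ ≤ payFin u σ ρ p := by
  obtain ⟨hnn, hsum⟩ := hρ
  have h1 : pay (u p) σ = ∑ i : Fin k, ρ p i * pay (u p) σ := by
    rw [← Finset.sum_mul, hsum, one_mul]
  rw [h1]
  unfold payFin
  apply Finset.sum_le_sum
  intro i _
  exact mul_le_mul_of_nonneg_left (Finset.inf'_le _ (Finset.mem_univ i)) (hnn i)

/-- If `(σ, ρ)` is a Nash equilibrium of the auxiliary finite game with world-chooser
opponents, then the lowered play `ℓ(σ,ρ) = σ` is an equilibrium of the original
min-game. -/
theorem nash_of_aux_game_gives_mingame_equilibrium {P : Type} [Fintype P] [DecidableEq P]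
    {S : P → Type} [∀ p, Fintype (S p)] {k : ℕ} [NeZero k]
    (u : ∀ p : P, Fin k → (∀ q, S q) → ℝ)
    (σ : ∀ p, S p → ℝ) (hσ : ∀ p, σ p ∈ stdSimplex ℝ (S p))
    (ρ : P → Fin k → ℝ) (hρ : ∀ p, ρ p ∈ stdSimplex ℝ (Fin k))
    (hnashP : ∀ p, ∀ σ' ∈ stdSimplex ℝ (S p),
      payFin u (Function.update σ p σ') ρ p ≤ payFin u σ ρ p)
    (hnashPhat : ∀ p, ∀ ρ' ∈ stdSimplex ℝ (Fin k),
      - payFin u σ (Function.update ρ p ρ') p ≤ - payFin u σ ρ p) :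
    ∀ p, ∀ σ' ∈ stdSimplex ℝ (S p),
      pay (u p) (Function.update σ p σ') ≤ pay (u p) σ := by
  intro p σ' hσ'
  have key2 : payFin u σ ρ p ≤ pay (u p) σ := by
    apply Finset.le_inf'
    intro i _
    have hδ : (fun j : Fin k => if j = i then (1:ℝ) else 0) ∈ stdSimplex ℝ (Fin k) := by
      constructor
      · intro j; dsimp; split <;> norm_num
      · simp
    have h := hnashPhat p _ hδ
    have h' : payFin u σ ρ p ≤ payFin u σ (Function.update ρ p fun j => if j = i then (1:ℝ) else 0) p := by
      linarith
    calc payFin u σ ρ p ≤ _ := h'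
      _ = expPay σ (u p i) := by
          unfold payFin
          simp [Function.update_self]
  calc pay (u p) (Function.update σ p σ')
      ≤ payFin u (Function.update σ p σ') ρ p := pay_le_payFin u _ ρ p (hρ p)
    _ ≤ payFin u σ ρ p := hnashP p σ' hσ'
    _ ≤ pay (u p) σ := key2
end

section
/- The map from plays of the induced min-game (with one player per equivalence class) to plays of the Kripke game preserves payoffs: pay^w_p(τ) = pay_{[w]_p}(σ), where τ_p restricted to class [w]_p equals σ_{[w]_p}. -/
open Finset

/-- Kripke-game payoff of player `p` in world `w`: each player `q`'s mixed strategy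
`σ q` is a distribution over pure strategies (maps from `≡_q`-equivalence classes to
`S q`), and the payoff is the minimum over all worlds `v ≡_p w` of the expected payoff
`E[u p v (X(v))]` of the play specialized to world `v`. -/
noncomputable def kpay {P W : Type} [Fintype P] [DecidableEq P] [Fintype W]
    (s : P → Setoid W) [∀ p, DecidableEq (Quotient (s p))] [∀ p, Fintype (Quotient (s p))]
    {S : P → Type} [∀ p, Fintype (S p)]
    (u : ∀ _ : P, W → (∀ q, S q) → ℝ)
    (σ : ∀ p, (Quotient (s p) → S p) → ℝ) (p : P) (w : W) : ℝ :=
  (Finset.univ.filter (fun v : W => (⟦v⟧ : Quotient (s p)) = ⟦w⟧)).inf'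
    ⟨w, by simp⟩
    (fun v => ∑ f : ∀ q, Quotient (s q) → S q,
      (∏ q, σ q (f q)) * u p v (fun q => f q ⟦v⟧))

/-- Payoff of player `[w]_p = ⟨p, c⟩` in the min-`|W|`-game induced from a Kripke game:
the minimum over all worlds `v` of her payoff in world `v`, which is the expected
Kripke payoff `u p v` of the profile of the class-players `⟨q, [v]_q⟩` when `v ≡_p w`,
and the large constant `A` otherwise. -/
noncomputable def mpay {P W : Type} [Fintype P] [DecidableEq P] [Fintype W] [Nonempty W]
    (s : P → Setoid W) [∀ p, DecidableEq (Quotient (s p))] [∀ p, Fintype (Quotient (s p))]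
    {S : P → Type} [∀ p, Fintype (S p)]
    (u : ∀ _ : P, W → (∀ q, S q) → ℝ) (A : ℝ)
    (σ : ∀ m : Σ p : P, Quotient (s p), S m.1 → ℝ) (p : P) (c : Quotient (s p)) : ℝ :=
  Finset.univ.inf' Finset.univ_nonempty (fun v : W =>
    if (⟦v⟧ : Quotient (s p)) = c then
      ∑ t : ∀ m : Σ q : P, Quotient (s q), S m.1,
        (∏ m, σ m (t m)) * u p v (fun q => t ⟨q, ⟦v⟧⟩)
    else A)

/-- The map from plays of the induced min-game to plays of the Kripke game preserves
payoffs: `pay^w_p τ = pay_{[w]_p} σ`, where `τ_p` is the product distribution with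
`τ_p` on class `[w]_p` given by `σ_{[w]_p}`, and `A` exceeds every payoff value. -/
theorem induced_mingame_preserves_payoffs {P W : Type} [Fintype P] [DecidableEq P]
    [Fintype W] [Nonempty W]
    (s : P → Setoid W) [∀ p, DecidableEq (Quotient (s p))] [∀ p, Fintype (Quotient (s p))]
    {S : P → Type} [∀ p, Fintype (S p)]
    (u : ∀ _ : P, W → (∀ q, S q) → ℝ) (A : ℝ)
    (hA : ∀ p v t, u p v t < A)
    (σ : ∀ m : Σ p : P, Quotient (s p), S m.1 → ℝ)
    (hσ : ∀ m, σ m ∈ stdSimplex ℝ (S m.1)) :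
    ∀ (p : P) (w : W),
      kpay s u (fun q f => ∏ c : Quotient (s q), σ ⟨q, c⟩ (f c)) p w
        = mpay s u A σ p ⟦w⟧ := by
  intro p w
  unfold kpay mpay
  have hsum : ∀ v : W,
      (∑ f : ∀ q, Quotient (s q) → S q,
        (∏ q, ∏ c : Quotient (s q), σ ⟨q, c⟩ (f q c)) * u p v (fun q => f q ⟦v⟧))
      = ∑ t : ∀ m : Σ q : P, Quotient (s q), S m.1,
          (∏ m, σ m (t m)) * u p v (fun q => t ⟨q, ⟦v⟧⟩) := by
    intro v
    refine (Fintype.sum_equiv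
      (Equiv.piCurry (fun (q : P) (_ : Quotient (s q)) => S q)) _ _ ?_).symm
    intro t
    have h1 : (∏ m : Σ q : P, Quotient (s q), σ m (t m))
        = ∏ q, ∏ c : Quotient (s q), σ ⟨q, c⟩ (t ⟨q, c⟩) := by
      rw [← Finset.univ_sigma_univ, Finset.prod_sigma]
    simp [Equiv.piCurry, Sigma.curry, h1]
  have hw1 : ∑ t : ∀ m : Σ q : P, Quotient (s q), S m.1, ∏ m, σ m (t m) = 1 := by
    rw [← Fintype.prod_sum (fun (m : Σ q : P, Quotient (s q)) (x : S m.1) => σ m x)]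
    exact Finset.prod_eq_one fun m _ => (hσ m).2
  have hE : ∀ v : W,
      (∑ t : ∀ m : Σ q : P, Quotient (s q), S m.1,
        (∏ m, σ m (t m)) * u p v (fun q => t ⟨q, ⟦v⟧⟩)) ≤ A := by
    intro v
    calc (∑ t : ∀ m : Σ q : P, Quotient (s q), S m.1,
          (∏ m, σ m (t m)) * u p v (fun q => t ⟨q, ⟦v⟧⟩))
        ≤ ∑ t : ∀ m : Σ q : P, Quotient (s q), S m.1, (∏ m, σ m (t m)) * A := by
          refine Finset.sum_le_sum fun t _ => ?_
          have h0 : (0:ℝ) ≤ ∏ m, σ m (t m) :=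
            Finset.prod_nonneg fun m _ => (hσ m).1 (t m)
          exact mul_le_mul_of_nonneg_left (le_of_lt (hA p v _)) h0
      _ = A := by rw [← Finset.sum_mul, hw1, one_mul]
  simp only [hsum]
  have hwmem : w ∈ Finset.univ.filter (fun v : W => (⟦v⟧ : Quotient (s p)) = ⟦w⟧) := by
    simp
  apply le_antisymm
  · refine Finset.le_inf' _ _ fun v _ => ?_
    by_cases hc : (⟦v⟧ : Quotient (s p)) = ⟦w⟧
    · rw [if_pos hc]
      exact Finset.inf'_le _ (Finset.mem_filter.mpr ⟨Finset.mem_univ v, hc⟩)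
    · rw [if_neg hc]
      exact le_trans (Finset.inf'_le _ hwmem) (hE w)
  · refine Finset.le_inf' _ _ fun v hv => ?_
    have hv' : (⟦v⟧ : Quotient (s p)) = ⟦w⟧ := (Finset.mem_filter.mp hv).2
    refine le_trans (Finset.inf'_le _ (Finset.mem_univ v)) ?_
    rw [if_pos hv']
end

section
/- If σ is an equilibrium of the induced min-game constructed from a Kripke game (with one min-game player per equivalence class of each player), then the corresponding play τ is an equilibrium of the Kripke game. -/
open Finset

open Finset

section KGHelpers

lemma kg_push {α β : Type*} [Fintype α] [Fintype β] [DecidableEq β]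
    (h : α → β) (μ : α → ℝ) (F : β → ℝ) :
    ∑ a, μ a * F (h a) = ∑ b, (∑ a, if h a = b then μ a else 0) * F b := by
  have step : ∀ b, (∑ a, if h a = b then μ a else 0) * F b
      = ∑ a, if h a = b then μ a * F (h a) else 0 := by
    intro b
    rw [Finset.sum_mul]
    refine Finset.sum_congr rfl fun a _ => ?_
    split_ifs with hab
    · rw [hab]
    · ring
  simp_rw [step]
  rw [Finset.sum_comm]
  refine Finset.sum_congr rfl fun a _ => ?_
  simp

lemma kg_sum_prod_pi {ι : Type*} [Fintype ι] [DecidableEq ι] {α : ι → Type*}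
    [∀ i, Fintype (α i)] (G : ∀ i, α i → ℝ) :
    ∑ t : ∀ i, α i, ∏ i, G i (t i) = ∏ i, ∑ x, G i x := by
  rw [Finset.prod_univ_sum, Fintype.piFinset_univ]

lemma kg_fiber_one {ι : Type*} [Fintype ι] [DecidableEq ι] {α : ι → Type*}
    [∀ i, Fintype (α i)] [∀ i, DecidableEq (α i)]
    (ρ : ∀ i, α i → ℝ) (h1 : ∀ i, ∑ x, ρ i x = 1) (i0 : ι) (x0 : α i0) :
    (∑ t : ∀ i, α i, if t i0 = x0 then ∏ i, ρ i (t i) else 0) = ρ i0 x0 := by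
  set ρ' : ∀ i, α i → ℝ :=
    Function.update ρ i0 (fun x => if x = x0 then ρ i0 x else 0) with hρ'
  have key : ∀ t : ∀ i, α i,
      (if t i0 = x0 then ∏ i, ρ i (t i) else 0) = ∏ i, ρ' i (t i) := by
    intro t
    by_cases h : t i0 = x0
    · simp only [h, if_true]
      refine Finset.prod_congr rfl fun i _ => ?_
      by_cases hi : i = i0
      · subst hi; simp [hρ', Function.update_self, h]
      · simp [hρ', Function.update_of_ne hi]
    · simp only [h, if_false]
      symm
      refine Finset.prod_eq_zero (Finset.mem_univ i0) ?_
      simp [hρ', h]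
  simp_rw [key, kg_sum_prod_pi]
  have step : ∀ i, (∑ x, ρ' i x) = if i = i0 then ρ i0 x0 else 1 := by
    intro i
    by_cases hi : i = i0
    · subst hi
      simp only [hρ', Function.update_self, if_true]
      simp [Finset.sum_ite_eq' Finset.univ x0 (ρ i)]
    · simp [hρ', Function.update_of_ne hi, h1 i, hi]
  simp_rw [step]
  simp

lemma kg_fiber_sigma {ι : Type} [Fintype ι] [DecidableEq ι] {κ : ι → Type}
    [∀ i, Fintype (κ i)] [∀ i, DecidableEq (κ i)] {α : ι → Type}
    [∀ i, Fintype (α i)] [∀ i, DecidableEq (α i)]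
    (ρ : ∀ m : Σ i, κ i, α m.1 → ℝ) (h1 : ∀ m, ∑ x, ρ m x = 1)
    (c0 : ∀ i, κ i) (g : ∀ i, α i) :
    (∑ t : ∀ m : Σ i, κ i, α m.1,
        if (∀ i, t ⟨i, c0 i⟩ = g i) then ∏ m, ρ m (t m) else 0)
      = ∏ i, ρ ⟨i, c0 i⟩ (g i) := by
  classical
  set ρ' : ∀ m : Σ i, κ i, α m.1 → ℝ :=
    fun m => if m.2 = c0 m.1 then (fun x => if x = g m.1 then ρ m x else 0) else ρ m
    with hρ'
  have key : ∀ t : ∀ m : Σ i, κ i, α m.1,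
      (if (∀ i, t ⟨i, c0 i⟩ = g i) then ∏ m, ρ m (t m) else 0)
        = ∏ m, ρ' m (t m) := by
    intro t
    by_cases h : ∀ i, t ⟨i, c0 i⟩ = g i
    · rw [if_pos h]
      refine Finset.prod_congr rfl fun m _ => ?_
      by_cases hm : m.2 = c0 m.1
      · have hmeq : m = ⟨m.1, c0 m.1⟩ := Sigma.ext rfl (heq_of_eq hm)
        simp only [hρ', hm, if_true]
        rw [if_pos]
        rw [hmeq]
        exact h m.1
      · simp [hρ', hm]
    · rw [if_neg h]
      symm
      push_neg at h
      obtain ⟨i0, hi0⟩ := h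
      refine Finset.prod_eq_zero (Finset.mem_univ (⟨i0, c0 i0⟩ : Σ i, κ i)) ?_
      simp [hρ', hi0]
  simp_rw [key, kg_sum_prod_pi]
  have step : ∀ m : Σ i, κ i,
      (∑ x, ρ' m x) = if m.2 = c0 m.1 then ρ m (g m.1) else 1 := by
    intro m
    by_cases hm : m.2 = c0 m.1
    · simp only [hρ', hm, if_true]
      simp [Finset.sum_ite_eq' Finset.univ (g m.1) (ρ m)]
    · simp [hρ', hm, h1 m]
  simp_rw [step]
  rw [← Finset.univ_sigma_univ, Finset.prod_sigma]
  refine Finset.prod_congr rfl fun i _ => ?_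
  simp

lemma kg_inf'_eq {W : Type} [Fintype W] [Nonempty W] {A : ℝ} {g1 g2 : W → ℝ}
    {cond : W → Prop} [DecidablePred cond] {w : W} (hw : cond w)
    (hg : ∀ v, cond v → g1 v = g2 v) (hle : ∀ v, cond v → g2 v ≤ A) :
    (Finset.univ.filter cond).inf' ⟨w, by simp [hw]⟩ g1
      = Finset.univ.inf' Finset.univ_nonempty (fun v => if cond v then g2 v else A) := by
  apply le_antisymm
  · apply Finset.le_inf'
    intro v _
    by_cases hv : cond v
    · rw [if_pos hv, ← hg v hv]
      exact Finset.inf'_le _ (by simp [hv])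
    · rw [if_neg hv]
      calc (Finset.univ.filter cond).inf' ⟨w, by simp [hw]⟩ g1 ≤ g1 w :=
            Finset.inf'_le _ (by simp [hw])
        _ = g2 w := hg w hw
        _ ≤ A := hle w hw
  · apply Finset.le_inf'
    intro v hv
    rw [Finset.mem_filter] at hv
    have h := Finset.inf'_le (b := v)
      (fun v => if cond v then g2 v else A) (Finset.mem_univ v)
    rw [if_pos hv.2] at h
    rw [hg v hv.2]
    exact h

section Core
variable {P W : Type} [Fintype P] [DecidableEq P] [Fintype W]
    (s : P → Setoid W) [∀ p, DecidableEq (Quotient (s p))] [∀ p, Fintype (Quotient (s p))]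
    {S : P → Type} [∀ p, Fintype (S p)] [∀ p, DecidableEq (S p)]

omit [Fintype W] in
lemma kg_mpay_core (ρ : ∀ m : Σ p : P, Quotient (s p), S m.1 → ℝ)
    (h1 : ∀ m, ∑ x, ρ m x = 1) (c0 : ∀ q, Quotient (s q)) (F : (∀ q, S q) → ℝ) :
    ∑ t : ∀ m : Σ q : P, Quotient (s q), S m.1,
        (∏ m, ρ m (t m)) * F (fun q => t ⟨q, c0 q⟩)
      = ∑ g : ∀ q, S q, (∏ q, ρ ⟨q, c0 q⟩ (g q)) * F g := by
  classical
  refine (kg_push (fun (t : ∀ m : Σ q : P, Quotient (s q), S m.1) (q : P) =>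
    t ⟨q, c0 q⟩) (fun t => ∏ m, ρ m (t m)) F).trans ?_
  refine Finset.sum_congr rfl fun g _ => ?_
  congr 1
  rw [← kg_fiber_sigma ρ h1 c0 g]
  refine Finset.sum_congr rfl fun t _ => ?_
  refine if_congr ?_ rfl rfl
  exact funext_iff

omit [Fintype W] in
lemma kg_kpay_core (υ : ∀ q : P, (Quotient (s q) → S q) → ℝ)
    (c0 : ∀ q, Quotient (s q)) (F : (∀ q, S q) → ℝ) :
    ∑ f : ∀ q : P, Quotient (s q) → S q,
        (∏ q, υ q (f q)) * F (fun q => f q (c0 q))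
      = ∑ g : ∀ q, S q,
        (∏ q, ∑ f' : Quotient (s q) → S q, if f' (c0 q) = g q then υ q f' else 0) * F g := by
  classical
  refine (kg_push (fun (f : ∀ q : P, Quotient (s q) → S q) (q : P) =>
    f q (c0 q)) (fun f => ∏ q, υ q (f q)) F).trans ?_
  refine Finset.sum_congr rfl fun g _ => ?_
  congr 1
  rw [← kg_sum_prod_pi (fun q f' => if f' (c0 q) = g q then υ q f' else 0)]
  refine Finset.sum_congr rfl fun f _ => ?_
  by_cases h : (fun q => f q (c0 q)) = g
  · rw [if_pos h]
    refine Finset.prod_congr rfl fun q _ => ?_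
    rw [if_pos (congrFun h q)]
  · rw [if_neg h]
    symm
    obtain ⟨q0, hq0⟩ := Function.ne_iff.mp h
    exact Finset.prod_eq_zero (Finset.mem_univ q0) (by simp [hq0])
end Core

end KGHelpers


/-- If `σ` is an equilibrium of the min-game induced from a Kripke game (one min-game
player per equivalence class of each player, with `A` exceeding every payoff value),
then the corresponding Kripke-game play `τ` (with `τ_p` the product of the `σ_{[w]_p}`)
is an equilibrium of the Kripke game. -/
theorem induced_mingame_equilibrium_gives_kripke_equilibrium {P W : Type}
    [Fintype P] [DecidableEq P] [Fintype W] [Nonempty W]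
    (s : P → Setoid W) [∀ p, DecidableEq (Quotient (s p))] [∀ p, Fintype (Quotient (s p))]
    {S : P → Type} [∀ p, Fintype (S p)]
    (u : ∀ _ : P, W → (∀ q, S q) → ℝ) (A : ℝ)
    (hA : ∀ p v t, u p v t < A)
    (σ : ∀ m : Σ p : P, Quotient (s p), S m.1 → ℝ)
    (hσ : ∀ m, σ m ∈ stdSimplex ℝ (S m.1))
    (heq : ∀ m : Σ p : P, Quotient (s p), ∀ σ' ∈ stdSimplex ℝ (S m.1),
      mpay s u A (Function.update σ m σ') m.1 m.2 ≤ mpay s u A σ m.1 m.2) :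
    ∀ (p : P) (w : W), ∀ τ' ∈ stdSimplex ℝ (Quotient (s p) → S p),
      kpay s u
        (Function.update (fun q f => ∏ c : Quotient (s q), σ ⟨q, c⟩ (f c)) p τ') p w
        ≤ kpay s u (fun q f => ∏ c : Quotient (s q), σ ⟨q, c⟩ (f c)) p w := by
  intro p w τ' hτ'
  classical
  set τ : ∀ q : P, (Quotient (s q) → S q) → ℝ :=
    fun q f => ∏ c : Quotient (s q), σ ⟨q, c⟩ (f c) with hτ
  set σ' : S p → ℝ :=
    fun x => ∑ f : Quotient (s p) → S p,
      if f (⟦w⟧ : Quotient (s p)) = x then τ' f else 0 with hσ'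
  have h1σ : ∀ m, ∑ x, σ m x = 1 := fun m => (hσ m).2
  have hσnn : ∀ m x, 0 ≤ σ m x := fun m x => (hσ m).1 x
  have hσ'mem : σ' ∈ stdSimplex ℝ (S p) := by
    constructor
    · intro x
      refine Finset.sum_nonneg fun f _ => ?_
      split_ifs
      · exact hτ'.1 f
      · exact le_refl 0
    · rw [hσ']
      rw [Finset.sum_comm]
      simp only [Finset.sum_ite_eq, Finset.mem_univ, if_true]
      exact hτ'.2
  set ρupd : ∀ m : Σ q : P, Quotient (s q), S m.1 → ℝ :=
    Function.update σ ⟨p, (⟦w⟧ : Quotient (s p))⟩ σ' with hρupd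
  have h1ρ : ∀ m, ∑ x, ρupd m x = 1 := by
    intro m
    by_cases hm : m = ⟨p, (⟦w⟧ : Quotient (s p))⟩
    · subst hm; rw [hρupd, Function.update_self]; exact hσ'mem.2
    · rw [hρupd, Function.update_of_ne hm]; exact h1σ m
  have hρnn : ∀ m x, 0 ≤ ρupd m x := by
    intro m x
    by_cases hm : m = ⟨p, (⟦w⟧ : Quotient (s p))⟩
    · subst hm; rw [hρupd, Function.update_self]; exact hσ'mem.1 x
    · rw [hρupd, Function.update_of_ne hm]; exact hσnn m x
  -- per-world equality, updated play
  have hKM_upd : ∀ v : W, (⟦v⟧ : Quotient (s p)) = (⟦w⟧ : Quotient (s p)) →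
      (∑ f : ∀ q : P, Quotient (s q) → S q,
        (∏ q, (Function.update τ p τ') q (f q)) * u p v (fun q => f q ⟦v⟧))
      = ∑ t : ∀ m : Σ q : P, Quotient (s q), S m.1,
        (∏ m, ρupd m (t m)) * u p v (fun q => t ⟨q, ⟦v⟧⟩) := by
    intro v hv
    rw [kg_kpay_core s (Function.update τ p τ') (fun q => ⟦v⟧) (u p v),
        kg_mpay_core s ρupd h1ρ (fun q => ⟦v⟧) (u p v)]
    refine Finset.sum_congr rfl fun g _ => ?_
    congr 1
    refine Finset.prod_congr rfl fun q _ => ?_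
    by_cases hq : q = p
    · subst hq
      rw [Function.update_self, hv, hρupd, Function.update_self]
    · rw [Function.update_of_ne hq]
      have hne : (⟨q, (⟦v⟧ : Quotient (s q))⟩ : Σ q : P, Quotient (s q))
          ≠ ⟨p, (⟦w⟧ : Quotient (s p))⟩ := fun h => hq (congrArg Sigma.fst h)
      rw [hρupd, Function.update_of_ne hne]
      exact kg_fiber_one (fun c : Quotient (s q) => σ ⟨q, c⟩)
        (fun c => h1σ ⟨q, c⟩) ⟦v⟧ (g q)
  -- per-world equality, original play
  have hKM_orig : ∀ v : W, (⟦v⟧ : Quotient (s p)) = (⟦w⟧ : Quotient (s p)) →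
      (∑ f : ∀ q : P, Quotient (s q) → S q,
        (∏ q, τ q (f q)) * u p v (fun q => f q ⟦v⟧))
      = ∑ t : ∀ m : Σ q : P, Quotient (s q), S m.1,
        (∏ m, σ m (t m)) * u p v (fun q => t ⟨q, ⟦v⟧⟩) := by
    intro v _
    rw [kg_kpay_core s τ (fun q => ⟦v⟧) (u p v),
        kg_mpay_core s σ h1σ (fun q => ⟦v⟧) (u p v)]
    refine Finset.sum_congr rfl fun g _ => ?_
    congr 1
    refine Finset.prod_congr rfl fun q _ => ?_
    exact kg_fiber_one (fun c : Quotient (s q) => σ ⟨q, c⟩)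
      (fun c => h1σ ⟨q, c⟩) ⟦v⟧ (g q)
  -- boundedness by A
  have hboundgen : ∀ (ρ : ∀ m : Σ q : P, Quotient (s q), S m.1 → ℝ),
      (∀ m, ∑ x, ρ m x = 1) → (∀ m x, 0 ≤ ρ m x) → ∀ v : W,
      (∑ t : ∀ m : Σ q : P, Quotient (s q), S m.1,
        (∏ m, ρ m (t m)) * u p v (fun q => t ⟨q, ⟦v⟧⟩)) ≤ A := by
    intro ρ h1 hnn v
    rw [kg_mpay_core s ρ h1 (fun q => ⟦v⟧) (u p v)]
    have hw1 : ∑ g : ∀ q, S q, ∏ q, ρ ⟨q, (⟦v⟧ : Quotient (s q))⟩ (g q) = 1 := by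
      rw [kg_sum_prod_pi]
      rw [Finset.prod_congr rfl (fun q _ => h1 ⟨q, ⟦v⟧⟩)]
      exact Finset.prod_const_one
    calc ∑ g : ∀ q, S q, (∏ q, ρ ⟨q, (⟦v⟧ : Quotient (s q))⟩ (g q)) * u p v g
        ≤ ∑ g : ∀ q, S q, (∏ q, ρ ⟨q, (⟦v⟧ : Quotient (s q))⟩ (g q)) * A := by
          refine Finset.sum_le_sum fun g _ => ?_
          exact mul_le_mul_of_nonneg_left (hA p v g).le
            (Finset.prod_nonneg fun q _ => hnn _ _)
      _ = A := by rw [← Finset.sum_mul, hw1, one_mul]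
  have e1 : kpay s u (Function.update τ p τ') p w
      = mpay s u A ρupd p (⟦w⟧ : Quotient (s p)) := by
    unfold kpay mpay
    exact kg_inf'_eq (cond := fun v : W => (⟦v⟧ : Quotient (s p)) = (⟦w⟧ : Quotient (s p)))
      rfl hKM_upd (fun v _ => hboundgen ρupd h1ρ hρnn v)
  have e2 : kpay s u τ p w = mpay s u A σ p (⟦w⟧ : Quotient (s p)) := by
    unfold kpay mpay
    exact kg_inf'_eq (cond := fun v : W => (⟦v⟧ : Quotient (s p)) = (⟦w⟧ : Quotient (s p)))
      rfl hKM_orig (fun v _ => hboundgen σ h1σ hσnn v)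
  rw [e1, e2]
  exact heq ⟨p, (⟦w⟧ : Quotient (s p))⟩ σ' hσ'mem
end
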